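/- (Nested identical temporal operators collapse.) For any signal ζ : ℝ≥0 → ℝⁿ, predicate function h, and intervals: sup_{t ∈ [a₁,b₁]} sup_{τ ∈ [t+a₂, t+b₂]} h(ζ(τ)) = sup_{τ ∈ [a₁+a₂, b₁+b₂]} h(ζ(τ)), and inf_{t ∈ [a₁,b₁]} inf_{τ ∈ [t+a₂, t+b₂]} h(ζ(τ)) = inf_{τ ∈ [a₁+a₂, b₁+b₂]} h(ζ(τ)), where 0 ≤ a₁ ≤ b₁ and 0 ≤ a₂ ≤ b₂ and h∘ζ is continuous (or bounded). -/

import Mathlib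

theorem stmt_15 (n : ℕ) (a₁ b₁ a₂ b₂ : ℝ)
    (h1 : 0 ≤ a₁) (h2 : a₁ ≤ b₁) (h3 : 0 ≤ a₂) (h4 : a₂ ≤ b₂)
    (ζ : ℝ → (Fin n → ℝ)) (h : (Fin n → ℝ) → ℝ)
    (hcont : Continuous (fun t => h (ζ t))) :
    sSup ((fun t => sSup ((fun τ => h (ζ τ)) '' Set.Icc (t + a₂) (t + b₂)))
        '' Set.Icc a₁ b₁) =
      sSup ((fun τ => h (ζ τ)) '' Set.Icc (a₁ + a₂) (b₁ + b₂)) ∧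
    sInf ((fun t => sInf ((fun τ => h (ζ τ)) '' Set.Icc (t + a₂) (t + b₂)))
        '' Set.Icc a₁ b₁) =
      sInf ((fun τ => h (ζ τ)) '' Set.Icc (a₁ + a₂) (b₁ + b₂)) := by
  set f : ℝ → ℝ := fun τ => h (ζ τ) with hf
  have hIcc : ∀ t ∈ Set.Icc a₁ b₁,
      Set.Icc (t + a₂) (t + b₂) ⊆ Set.Icc (a₁ + a₂) (b₁ + b₂) := by
    rintro t ⟨ht1, ht2⟩
    exact Set.Icc_subset_Icc (by linarith) (by linarith)
  have hKc : IsCompact (f '' Set.Icc (a₁ + a₂) (b₁ + b₂)) := isCompact_Icc.image hcont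
  have hbddA : BddAbove (f '' Set.Icc (a₁ + a₂) (b₁ + b₂)) := hKc.bddAbove
  have hbddB : BddBelow (f '' Set.Icc (a₁ + a₂) (b₁ + b₂)) := hKc.bddBelow
  have hne : ∀ t : ℝ, (f '' Set.Icc (t + a₂) (t + b₂)).Nonempty := fun t =>
    ⟨f (t + a₂), ⟨t + a₂, ⟨le_refl _, by linarith⟩, rfl⟩⟩
  have hneR : (f '' Set.Icc (a₁ + a₂) (b₁ + b₂)).Nonempty :=
    ⟨f (a₁ + a₂), ⟨a₁ + a₂, ⟨le_refl _, by linarith⟩, rfl⟩⟩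
  have hneO : (Set.Icc a₁ b₁).Nonempty := ⟨a₁, le_refl _, h2⟩
  have hchoice : ∀ τ ∈ Set.Icc (a₁ + a₂) (b₁ + b₂),
      ∃ t ∈ Set.Icc a₁ b₁, τ ∈ Set.Icc (t + a₂) (t + b₂) := by
    rintro τ ⟨hτ1, hτ2⟩
    refine ⟨max a₁ (τ - b₂), ⟨le_max_left _ _, max_le h2 (by linarith)⟩, ?_, ?_⟩
    · rcases le_total a₁ (τ - b₂) with hc | hc
      · rw [max_eq_right hc]; linarith
      · rw [max_eq_left hc]; linarith
    · rcases le_total a₁ (τ - b₂) with hc | hc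
      · rw [max_eq_right hc]; linarith
      · rw [max_eq_left hc]; linarith
  constructor
  · -- sup part
    have hle : ∀ t ∈ Set.Icc a₁ b₁,
        sSup (f '' Set.Icc (t + a₂) (t + b₂)) ≤ sSup (f '' Set.Icc (a₁ + a₂) (b₁ + b₂)) :=
      fun t ht => csSup_le_csSup hbddA (hne t) (Set.image_mono (f := f) (hIcc t ht))
    have hbddO : BddAbove ((fun t => sSup (f '' Set.Icc (t + a₂) (t + b₂))) '' Set.Icc a₁ b₁) := by
      refine ⟨sSup (f '' Set.Icc (a₁ + a₂) (b₁ + b₂)), ?_⟩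
      rintro _ ⟨t, ht, rfl⟩
      exact hle t ht
    apply le_antisymm
    · apply csSup_le (hneO.image _)
      rintro _ ⟨t, ht, rfl⟩
      exact hle t ht
    · apply csSup_le hneR
      rintro _ ⟨τ, hτ, rfl⟩
      obtain ⟨t, ht, hmem⟩ := hchoice τ hτ
      calc f τ ≤ sSup (f '' Set.Icc (t + a₂) (t + b₂)) :=
            le_csSup (hbddA.mono (Set.image_mono (f := f) (hIcc t ht))) ⟨τ, hmem, rfl⟩
        _ ≤ _ := le_csSup hbddO ⟨t, ht, rfl⟩
  · -- inf part
    have hle : ∀ t ∈ Set.Icc a₁ b₁,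
        sInf (f '' Set.Icc (a₁ + a₂) (b₁ + b₂)) ≤ sInf (f '' Set.Icc (t + a₂) (t + b₂)) :=
      fun t ht => csInf_le_csInf hbddB (hne t) (Set.image_mono (f := f) (hIcc t ht))
    have hbddO : BddBelow ((fun t => sInf (f '' Set.Icc (t + a₂) (t + b₂))) '' Set.Icc a₁ b₁) := by
      refine ⟨sInf (f '' Set.Icc (a₁ + a₂) (b₁ + b₂)), ?_⟩
      rintro _ ⟨t, ht, rfl⟩
      exact hle t ht
    apply le_antisymm
    · apply le_csInf hneR
      rintro _ ⟨τ, hτ, rfl⟩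
      obtain ⟨t, ht, hmem⟩ := hchoice τ hτ
      calc sInf ((fun t => sInf (f '' Set.Icc (t + a₂) (t + b₂))) '' Set.Icc a₁ b₁)
            ≤ sInf (f '' Set.Icc (t + a₂) (t + b₂)) := csInf_le hbddO ⟨t, ht, rfl⟩
        _ ≤ f τ := csInf_le (hbddB.mono (Set.image_mono (f := f) (hIcc t ht))) ⟨τ, hmem, rfl⟩
    · apply le_csInf (hneO.image _)
      rintro _ ⟨t, ht, rfl⟩
      exact hle t ht
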